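/- Suppose there exist C > 1, γ ∈ [0,1) and a current-mode-independent memory controller Ψ such that ‖φ(k, σ, x₀, Ψ)‖ ≤ C γ^k ‖x₀‖ for all x₀, σ, k. Then the value function V(x₀) = inf over memory controllers Ψ' of sup over σ of Σ_{k=0}^∞ ‖φ(k, σ, x₀, Ψ')‖ is a norm on ℝⁿ: it is positive definite, absolutely homogeneous of degree one, and subadditive. Consequently, V is convex and continuous on ℝⁿ. -/

import Mathlib

open Matrix Filter ENNReal

noncomputable section

/-- State history `[x(k), …, x(0)]` of the closed loop driven by the reversed
mode list `[i_{k-1}, …, i_0]`, under a current-mode-independent memory controller `Ψ`. -/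
def memHist {n m : ℕ} {S : Type*} (A : S → Matrix (Fin n) (Fin n) ℝ)
    (B : S → Matrix (Fin n) (Fin m) ℝ)
    (Ψ : List (EuclideanSpace ℝ (Fin n)) → List S → EuclideanSpace ℝ (Fin m))
    (x0 : EuclideanSpace ℝ (Fin n)) : List S → List (EuclideanSpace ℝ (Fin n))
  | [] => [x0]
  | i :: is =>
      (WithLp.toLp 2 ((A i).mulVec ((memHist A B Ψ x0 is).headD 0) +
        (B i).mulVec (Ψ (memHist A B Ψ x0 is) is))) :: memHist A B Ψ x0 is

/-- Closed-loop solution `φ(k, σ, x0, Ψ)` under the switching signal `σ`: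
at each step, `Ψ` receives the current and past states `(x(k), …, x(0))`
and the past modes `(σ(k-1), …, σ(0))`. -/
def memTraj {n m : ℕ} {S : Type*} (A : S → Matrix (Fin n) (Fin n) ℝ)
    (B : S → Matrix (Fin n) (Fin m) ℝ)
    (Ψ : List (EuclideanSpace ℝ (Fin n)) → List S → EuclideanSpace ℝ (Fin m))
    (x0 : EuclideanSpace ℝ (Fin n)) (σ : ℕ → S) (k : ℕ) : EuclideanSpace ℝ (Fin n) :=
  (memHist A B Ψ x0 (((List.range k).reverse).map σ)).headD 0

/-- The value function `V(x₀) = inf_Ψ sup_σ Σₖ ‖φ(k, σ, x₀, Ψ)‖`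
(computed in `ℝ≥0∞` and converted to a real number). -/
def valFun {n m : ℕ} {S : Type*} (A : S → Matrix (Fin n) (Fin n) ℝ)
    (B : S → Matrix (Fin n) (Fin m) ℝ) (x0 : EuclideanSpace ℝ (Fin n)) : ℝ :=
  (⨅ Ψ : List (EuclideanSpace ℝ (Fin n)) → List S → EuclideanSpace ℝ (Fin m),
    ⨆ σ : ℕ → S, ∑' k : ℕ, (‖memTraj A B Ψ x0 σ k‖₊ : ℝ≥0∞)).toReal

/-!
`V` is `toReal` of the `ℝ≥0∞`-valued infimum of worst-case costs. Rescaling a controller,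
`Ψ_c(xs) = c • Ψ(c⁻¹ • xs)`, rescales every closed-loop trajectory by `c`. Since a closed-loop
trajectory is determined by the initial state and the past modes, a controller can simulate the
closed loops of `Ψ₁` from `x` and of `Ψ₂` from `y` and apply the sum of their inputs; by linearity
its trajectory from `x + y` is the sum of theirs. Hence `V` is homogeneous and subadditive, i.e. a
seminorm, provided it is finite, which the stabilising controller guarantees through the bound
`C ‖x₀‖ / (1 - γ)`. The term `k = 0` of the cost is `‖x₀‖`, so `V` is definite, and, being a
finite convex function on `ℝⁿ`, it is continuous.
-/

section

variable {n m : ℕ} {S : Type*}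

abbrev MemoryController (n m : ℕ) (S : Type*) :=
  List (EuclideanSpace ℝ (Fin n)) → List S → EuclideanSpace ℝ (Fin m)

variable (A : S → Matrix (Fin n) (Fin n) ℝ) (B : S → Matrix (Fin n) (Fin m) ℝ)

def worstCaseCost (Ψ : MemoryController n m S) (x0 : EuclideanSpace ℝ (Fin n)) : ℝ≥0∞ :=
  ⨆ σ : ℕ → S, ∑' k : ℕ, (‖memTraj A B Ψ x0 σ k‖₊ : ℝ≥0∞)

def optimalCost (x0 : EuclideanSpace ℝ (Fin n)) : ℝ≥0∞ :=
  ⨅ Ψ : MemoryController n m S, worstCaseCost A B Ψ x0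

theorem valFun_eq_toReal_optimalCost (x0 : EuclideanSpace ℝ (Fin n)) :
    valFun A B x0 = (optimalCost A B x0).toReal := rfl

@[simp]
theorem memTraj_zero (Ψ : MemoryController n m S) (x0 : EuclideanSpace ℝ (Fin n)) (σ : ℕ → S) :
    memTraj A B Ψ x0 σ 0 = x0 := by
  simp [memTraj, memHist]

theorem ofReal_norm_le_worstCaseCost [Nonempty S] (Ψ : MemoryController n m S)
    (x0 : EuclideanSpace ℝ (Fin n)) : ENNReal.ofReal ‖x0‖ ≤ worstCaseCost A B Ψ x0 := by
  obtain ⟨σ⟩ : Nonempty (ℕ → S) := inferInstance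
  refine le_iSup_of_le σ ?_
  rw [ofReal_norm, enorm_eq_nnnorm]
  simpa using ENNReal.le_tsum (f := fun k ↦ (‖memTraj A B Ψ x0 σ k‖₊ : ℝ≥0∞)) 0

theorem ofReal_norm_le_optimalCost [Nonempty S] (x0 : EuclideanSpace ℝ (Fin n)) :
    ENNReal.ofReal ‖x0‖ ≤ optimalCost A B x0 :=
  le_iInf fun Ψ ↦ ofReal_norm_le_worstCaseCost A B Ψ x0

theorem worstCaseCost_le_of_exp_stable {C γ : ℝ} (hγ0 : 0 ≤ γ) (hγ1 : γ < 1)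
    {Ψ : MemoryController n m S}
    (hΨ : ∀ x0 σ k, ‖memTraj A B Ψ x0 σ k‖ ≤ C * γ ^ k * ‖x0‖) (x0 : EuclideanSpace ℝ (Fin n)) :
    worstCaseCost A B Ψ x0 ≤ ENNReal.ofReal (C * ‖x0‖ * (1 - γ)⁻¹) := by
  refine iSup_le fun σ ↦ ?_
  have hnonneg (k : ℕ) : 0 ≤ C * ‖x0‖ * γ ^ k := by
    simpa only [mul_right_comm] using (norm_nonneg _).trans (hΨ x0 σ k)
  have hsum : HasSum (fun k ↦ C * ‖x0‖ * γ ^ k) (C * ‖x0‖ * (1 - γ)⁻¹) :=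
    (hasSum_geometric_of_lt_one hγ0 hγ1).mul_left _
  calc ∑' k, (‖memTraj A B Ψ x0 σ k‖₊ : ℝ≥0∞)
      ≤ ∑' k, ENNReal.ofReal (C * ‖x0‖ * γ ^ k) := by
        refine ENNReal.tsum_le_tsum fun k ↦ ?_
        rw [← enorm_eq_nnnorm, ← ofReal_norm, mul_right_comm]
        exact ENNReal.ofReal_le_ofReal (hΨ x0 σ k)
    _ = ENNReal.ofReal (C * ‖x0‖ * (1 - γ)⁻¹) := by
        rw [← ENNReal.ofReal_tsum_of_nonneg hnonneg hsum.summable, hsum.tsum_eq]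

theorem optimalCost_ne_top_of_exp_stable {C γ : ℝ} (hγ0 : 0 ≤ γ) (hγ1 : γ < 1)
    {Ψ : MemoryController n m S}
    (hΨ : ∀ x0 σ k, ‖memTraj A B Ψ x0 σ k‖ ≤ C * γ ^ k * ‖x0‖) (x0 : EuclideanSpace ℝ (Fin n)) :
    optimalCost A B x0 ≠ ⊤ :=
  ((iInf_le _ Ψ).trans (worstCaseCost_le_of_exp_stable A B hγ0 hγ1 hΨ x0)).trans_lt
    ENNReal.ofReal_lt_top |>.ne

section Scaling

def scaleController (c : ℝ) (Ψ : MemoryController n m S) : MemoryController n m S :=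
  fun xs is ↦ c • Ψ (xs.map (c⁻¹ • ·)) is

theorem List.headD_map_smul {R M : Type*} [Zero M] [SMulZeroClass R M] (c : R) (l : List M) :
    (l.map (c • ·)).headD 0 = c • l.headD 0 := by
  cases l <;> simp

theorem memHist_scaleController (c : ℝ) (Ψ : MemoryController n m S)
    (x0 : EuclideanSpace ℝ (Fin n)) (is : List S) :
    memHist A B (scaleController c Ψ) (c • x0) is = (memHist A B Ψ x0 is).map (c • ·) := by
  induction is with
  | nil => simp [memHist]
  | cons i is ih =>
    have hinput : scaleController c Ψ ((memHist A B Ψ x0 is).map (c • ·)) is =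
        c • Ψ (memHist A B Ψ x0 is) is := by
      rcases eq_or_ne c 0 with rfl | hc
      · simp [scaleController]
      · simp [scaleController, List.map_map, Function.comp_def, smul_smul, hc]
    simp only [memHist, ih, hinput, List.headD_map_smul, List.map_cons, WithLp.ofLp_smul,
      Matrix.mulVec_smul, ← smul_add, WithLp.toLp_smul]

theorem memTraj_scaleController (c : ℝ) (Ψ : MemoryController n m S)
    (x0 : EuclideanSpace ℝ (Fin n)) (σ : ℕ → S) (k : ℕ) :
    memTraj A B (scaleController c Ψ) (c • x0) σ k = c • memTraj A B Ψ x0 σ k := by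
  rw [memTraj, memHist_scaleController, List.headD_map_smul, memTraj]

theorem worstCaseCost_scaleController (c : ℝ) (Ψ : MemoryController n m S)
    (x0 : EuclideanSpace ℝ (Fin n)) :
    worstCaseCost A B (scaleController c Ψ) (c • x0) = ‖c‖₊ * worstCaseCost A B Ψ x0 := by
  simp only [worstCaseCost, ENNReal.mul_iSup, ← ENNReal.tsum_mul_left, memTraj_scaleController,
    nnnorm_smul, ENNReal.coe_mul]

theorem optimalCost_smul_le (c : ℝ) (x0 : EuclideanSpace ℝ (Fin n)) :
    optimalCost A B (c • x0) ≤ ‖c‖₊ * optimalCost A B x0 := by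
  unfold optimalCost
  rw [ENNReal.mul_iInf fun h ↦ absurd h ENNReal.coe_ne_top]
  exact le_iInf fun Ψ ↦ iInf_le_of_le (scaleController c Ψ)
    (worstCaseCost_scaleController A B c Ψ x0).le

end Scaling

section Superposition

def superposeController (Ψ₁ Ψ₂ : MemoryController n m S) (x y : EuclideanSpace ℝ (Fin n)) :
    MemoryController n m S :=
  fun _ is ↦ Ψ₁ (memHist A B Ψ₁ x is) is + Ψ₂ (memHist A B Ψ₂ y is) is

theorem headD_memHist_superposeController (Ψ₁ Ψ₂ : MemoryController n m S)
    (x y : EuclideanSpace ℝ (Fin n)) (is : List S) :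
    (memHist A B (superposeController A B Ψ₁ Ψ₂ x y) (x + y) is).headD 0 =
      (memHist A B Ψ₁ x is).headD 0 + (memHist A B Ψ₂ y is).headD 0 := by
  induction is with
  | nil => simp [memHist]
  | cons i is ih =>
    simp only [memHist, List.headD_cons, superposeController, ih, WithLp.ofLp_add,
      Matrix.mulVec_add, WithLp.toLp_add]
    abel

theorem memTraj_superposeController (Ψ₁ Ψ₂ : MemoryController n m S)
    (x y : EuclideanSpace ℝ (Fin n)) (σ : ℕ → S) (k : ℕ) :
    memTraj A B (superposeController A B Ψ₁ Ψ₂ x y) (x + y) σ k =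
      memTraj A B Ψ₁ x σ k + memTraj A B Ψ₂ y σ k :=
  headD_memHist_superposeController A B Ψ₁ Ψ₂ x y _

theorem worstCaseCost_superposeController_le (Ψ₁ Ψ₂ : MemoryController n m S)
    (x y : EuclideanSpace ℝ (Fin n)) :
    worstCaseCost A B (superposeController A B Ψ₁ Ψ₂ x y) (x + y) ≤
      worstCaseCost A B Ψ₁ x + worstCaseCost A B Ψ₂ y := by
  refine iSup_le fun σ ↦ ?_
  calc ∑' k, (‖memTraj A B (superposeController A B Ψ₁ Ψ₂ x y) (x + y) σ k‖₊ : ℝ≥0∞)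
      ≤ ∑' k, ((‖memTraj A B Ψ₁ x σ k‖₊ : ℝ≥0∞) + ‖memTraj A B Ψ₂ y σ k‖₊) := by
        refine ENNReal.tsum_le_tsum fun k ↦ ?_
        rw [memTraj_superposeController, ← ENNReal.coe_add]
        exact_mod_cast nnnorm_add_le _ _
    _ = ∑' k, (‖memTraj A B Ψ₁ x σ k‖₊ : ℝ≥0∞) + ∑' k, (‖memTraj A B Ψ₂ y σ k‖₊ : ℝ≥0∞) :=
        ENNReal.tsum_add
    _ ≤ worstCaseCost A B Ψ₁ x + worstCaseCost A B Ψ₂ y :=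
        add_le_add (le_iSup_of_le σ le_rfl) (le_iSup_of_le σ le_rfl)

theorem optimalCost_add_le (x y : EuclideanSpace ℝ (Fin n)) :
    optimalCost A B (x + y) ≤ optimalCost A B x + optimalCost A B y := by
  unfold optimalCost
  rw [ENNReal.iInf_add]
  refine le_iInf fun Ψ₁ ↦ ?_
  rw [ENNReal.add_iInf]
  exact le_iInf fun Ψ₂ ↦ iInf_le_of_le (superposeController A B Ψ₁ Ψ₂ x y)
    (worstCaseCost_superposeController_le A B Ψ₁ Ψ₂ x y)

end Superposition

section FiniteCost

variable {A B}

theorem valFun_add_le (hfin : ∀ x, optimalCost A B x ≠ ⊤) (x y : EuclideanSpace ℝ (Fin n)) :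
    valFun A B (x + y) ≤ valFun A B x + valFun A B y :=
  ENNReal.toReal_le_add (optimalCost_add_le A B x y) (hfin x) (hfin y)

theorem valFun_smul_le (hfin : ∀ x, optimalCost A B x ≠ ⊤) (c : ℝ)
    (x : EuclideanSpace ℝ (Fin n)) :
    valFun A B (c • x) ≤ ‖c‖ * valFun A B x := by
  simpa [valFun_eq_toReal_optimalCost] using
    ENNReal.toReal_mono (ENNReal.mul_ne_top ENNReal.coe_ne_top (hfin x))
      (optimalCost_smul_le A B c x)

theorem valFun_zero (hfin : ∀ x, optimalCost A B x ≠ ⊤) : valFun A B 0 = 0 :=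
  le_antisymm (by simpa using valFun_smul_le hfin 0 0) ENNReal.toReal_nonneg

def valSeminorm (hfin : ∀ x, optimalCost A B x ≠ ⊤) : Seminorm ℝ (EuclideanSpace ℝ (Fin n)) :=
  .ofSMulLE (valFun A B) (valFun_zero hfin) (valFun_add_le hfin) (valFun_smul_le hfin)

@[simp]
theorem coe_valSeminorm (hfin : ∀ x, optimalCost A B x ≠ ⊤) : ⇑(valSeminorm hfin) = valFun A B :=
  rfl

theorem valFun_smul (hfin : ∀ x, optimalCost A B x ≠ ⊤) (c : ℝ) (x : EuclideanSpace ℝ (Fin n)) :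
    valFun A B (c • x) = |c| * valFun A B x := by
  simpa using map_smul_eq_mul (valSeminorm hfin) c x

theorem convexOn_valFun (hfin : ∀ x, optimalCost A B x ≠ ⊤) :
    ConvexOn ℝ Set.univ (valFun A B) := by
  simpa using (valSeminorm hfin).convexOn

theorem norm_le_valFun [Nonempty S] (hfin : ∀ x, optimalCost A B x ≠ ⊤)
    (x : EuclideanSpace ℝ (Fin n)) : ‖x‖ ≤ valFun A B x := by
  simpa [valFun_eq_toReal_optimalCost] using
    ENNReal.toReal_mono (hfin x) (ofReal_norm_le_optimalCost A B x)

end FiniteCost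

end

theorem valFun_is_norm_general {n m : ℕ} {S : Type*} [Nonempty S]
    (A : S → Matrix (Fin n) (Fin n) ℝ) (B : S → Matrix (Fin n) (Fin m) ℝ)
    (C γ : ℝ) (hγ : γ ∈ Set.Ico (0 : ℝ) 1)
    (Ψ : List (EuclideanSpace ℝ (Fin n)) → List S → EuclideanSpace ℝ (Fin m))
    (hΨ : ∀ (x0 : EuclideanSpace ℝ (Fin n)) (σ : ℕ → S) (k : ℕ),
      ‖memTraj A B Ψ x0 σ k‖ ≤ C * γ ^ k * ‖x0‖) :
    ((valFun A B (0 : EuclideanSpace ℝ (Fin n)) = 0 ∧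
        ∀ x : EuclideanSpace ℝ (Fin n), x ≠ 0 → 0 < valFun A B x) ∧
      (∀ (lam : ℝ) (x : EuclideanSpace ℝ (Fin n)),
        valFun A B (lam • x) = |lam| * valFun A B x) ∧
      (∀ x y : EuclideanSpace ℝ (Fin n),
        valFun A B (x + y) ≤ valFun A B x + valFun A B y)) ∧
    ConvexOn ℝ Set.univ (valFun A B) ∧ Continuous (valFun A B) := by
  have hfin := optimalCost_ne_top_of_exp_stable A B hγ.1 hγ.2 hΨ
  have hconvex := convexOn_valFun hfin
  refine ⟨⟨⟨valFun_zero hfin, fun x hx ↦ (norm_pos_iff.2 hx).trans_le (norm_le_valFun hfin x)⟩,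
    valFun_smul hfin, valFun_add_le hfin⟩, hconvex, ?_⟩
  exact continuousOn_univ.mp (hconvex.continuousOn isOpen_univ)

/-- Under exponential stabilizability by a memory controller,
the value function is a norm on `ℝⁿ` (positive definite, absolutely homogeneous of
degree one, subadditive); consequently it is convex and continuous. -/
theorem valFun_is_norm {n m : ℕ} (hn : 0 < n) (hm : 0 < m) {S : Type*} [Fintype S] [Nonempty S]
    (A : S → Matrix (Fin n) (Fin n) ℝ) (B : S → Matrix (Fin n) (Fin m) ℝ)
    (C γ : ℝ) (hC : 1 < C) (hγ : γ ∈ Set.Ico (0 : ℝ) 1)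
    (Ψ : List (EuclideanSpace ℝ (Fin n)) → List S → EuclideanSpace ℝ (Fin m))
    (hΨ : ∀ (x0 : EuclideanSpace ℝ (Fin n)) (σ : ℕ → S) (k : ℕ),
      ‖memTraj A B Ψ x0 σ k‖ ≤ C * γ ^ k * ‖x0‖) :
    ((valFun A B (0 : EuclideanSpace ℝ (Fin n)) = 0 ∧
        ∀ x : EuclideanSpace ℝ (Fin n), x ≠ 0 → 0 < valFun A B x) ∧
      (∀ (lam : ℝ) (x : EuclideanSpace ℝ (Fin n)),
        valFun A B (lam • x) = |lam| * valFun A B x) ∧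
      (∀ x y : EuclideanSpace ℝ (Fin n),
        valFun A B (x + y) ≤ valFun A B x + valFun A B y)) ∧
    ConvexOn ℝ Set.univ (valFun A B) ∧ Continuous (valFun A B) :=
  valFun_is_norm_general A B C γ hγ Ψ hΨ
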